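/- arXiv:1504.03127 — 3 statements merged into one kernel-verified Lean document; each statement's English description precedes it below -/
import Mathlib

section
/- Let i,j,k be pairwise distinct and s a set of signs. Indices i and j are adjacent in s if and only if i and j are adjacent in τ_{ik}(τ_{jk}(s)). (Goodness of a crossing is preserved under the third Reidemeister move applied to the preceding two crossings.) -/
/-- A set of signs: antisymmetric `±1`-valued function on pairs of distinct
indices in `{1,…,n}` (encoded as `Fin n`), with `0` on the diagonal. -/
def IsSignSet {n : ℕ} (s : Fin n → Fin n → ℤ) : Prop :=
  (∀ i j, i ≠ j → s i j = 1 ∨ s i j = -1) ∧ ∀ i j, s j i = -s i j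

/-- `N` realizes `s`: the `N i` are pairwise distinct reals and
`s i j = sign (N j - N i)`. -/
def Realizes {n : ℕ} (N : Fin n → ℝ) (s : Fin n → Fin n → ℤ) : Prop :=
  Function.Injective N ∧ ∀ i j, (s i j : ℝ) = Real.sign (N j - N i)

/-- A set of signs is realizable if some injective `N : Fin n → ℝ` realizes it. -/
def Realizable {n : ℕ} (s : Fin n → Fin n → ℤ) : Prop :=
  ∃ N : Fin n → ℝ, Realizes N s

/-- The sign-flip map `τ_{ij}`: negates the values at `(i,j)` and `(j,i)`,
fixing all other values. -/
def tau {n : ℕ} (i j : Fin n) (s : Fin n → Fin n → ℤ) : Fin n → Fin n → ℤ :=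
  fun p q => if (p = i ∧ q = j) ∨ (p = j ∧ q = i) then -s p q else s p q

/-- Indices `i` and `j` are adjacent in `s` if `s i k = s j k` for all `k ≠ i, j`. -/
def Adjacent {n : ℕ} (i j : Fin n) (s : Fin n → Fin n → ℤ) : Prop :=
  ∀ k, k ≠ i → k ≠ j → s i k = s j k

/-- The standard set of signs `B`: `B i j = +1` iff `i < j`. -/
def stdSigns (n : ℕ) : Fin n → Fin n → ℤ :=
  fun i j => if i < j then 1 else if j < i then -1 else 0

section Tau

variable {n : ℕ} {a b p q : Fin n} (s : Fin n → Fin n → ℤ)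

theorem tau_apply_left : tau a b s a b = -s a b :=
  if_pos (Or.inl ⟨rfl, rfl⟩)

theorem tau_apply_right_of_ne (hpa : p ≠ a) : tau a b s p b = s p b :=
  if_neg fun h => h.elim (fun h => hpa h.1) fun h => hpa (h.1.trans h.2)

theorem tau_apply_of_right_ne (hqa : q ≠ a) (hqb : q ≠ b) : tau a b s p q = s p q :=
  if_neg fun h => h.elim (fun h => hqb h.2) fun h => hqa h.2

end Tau

theorem adjacent_congr {n : ℕ} {i j : Fin n} {s t : Fin n → Fin n → ℤ}
    (h : ∀ l, l ≠ i → l ≠ j → (s i l = s j l ↔ t i l = t j l)) :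
    Adjacent i j s ↔ Adjacent i j t :=
  forall_congr' fun l => imp_congr_right fun hli => imp_congr_right fun hlj => h l hli hlj

theorem stmt8_general {n : ℕ} (i j k : Fin n) (hij : i ≠ j)
    (s : Fin n → Fin n → ℤ) :
    Adjacent i j s ↔ Adjacent i j (tau i k (tau j k s)) := by
  -- Among the columns `l ≠ i, j`, only column `k` changes, and there both rows flip sign.
  refine adjacent_congr fun l hli hlj => ?_
  by_cases hlk : l = k
  · subst hlk
    rw [tau_apply_left, tau_apply_right_of_ne _ hij, tau_apply_right_of_ne _ hij.symm,
      tau_apply_left, neg_inj]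
  · rw [tau_apply_of_right_ne _ hli hlk, tau_apply_of_right_ne _ hlj hlk,
      tau_apply_of_right_ne _ hli hlk, tau_apply_of_right_ne _ hlj hlk]

/-- Goodness of a crossing is preserved by a third Reidemeister move applied to
the two preceding crossings. -/
theorem stmt8 {n : ℕ} (i j k : Fin n) (hij : i ≠ j) (hik : i ≠ k) (hjk : j ≠ k)
    (s : Fin n → Fin n → ℤ) :
    Adjacent i j s ↔ Adjacent i j (tau i k (tau j k s)) :=
  stmt8_general i j k hij s
end

section
/- If s is a realizable set of signs and indices i,j are adjacent in s, then τ_{ij}(s) is also realizable. -/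
/-! If `N` realizes `s` and `i`, `j` are adjacent, then exchanging the values `N i` and `N j`
realizes `τ_{ij}(s)`: the comparison between `i` and `j` is reversed, and every comparison with a
third index `k` is unchanged because `i` and `j` compare alike with `k`. -/

theorem Realizes.neg_symm {n : ℕ} {N : Fin n → ℝ} {s : Fin n → Fin n → ℤ} (h : Realizes N s)
    (a b : Fin n) : s b a = -s a b := by
  have h' : (s b a : ℝ) = -(s a b : ℝ) := by
    rw [h.2, h.2, ← neg_sub, Real.sign_neg]
  exact_mod_cast h'

theorem Realizes.comp_perm {n : ℕ} {N : Fin n → ℝ} {s : Fin n → Fin n → ℤ} (h : Realizes N s)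
    (σ : Equiv.Perm (Fin n)) : Realizes (N ∘ σ) (fun p q => s (σ p) (σ q)) :=
  ⟨h.1.comp σ.injective, fun p q => h.2 (σ p) (σ q)⟩

theorem tau_eq_comp_swap {n : ℕ} {i j : Fin n} {s : Fin n → Fin n → ℤ}
    (hs : ∀ a b, s b a = -s a b) (hadj : Adjacent i j s) :
    tau i j s = fun p q => s (Equiv.swap i j p) (Equiv.swap i j q) := by
  funext p q
  simp only [tau, Equiv.swap_apply_def]
  -- on `{i, j}²` antisymmetry (hence `s a a = 0`) decides; a mixed pair is settled by adjacency
  grind [Adjacent]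

theorem stmt10_general {n : ℕ} (i j : Fin n) (s : Fin n → Fin n → ℤ)
    (hreal : Realizable s) (hadj : Adjacent i j s) :
    Realizable (tau i j s) := by
  obtain ⟨N, hN⟩ := hreal
  rw [tau_eq_comp_swap hN.neg_symm hadj]
  exact ⟨_, hN.comp_perm (Equiv.swap i j)⟩

/-- Flipping a pair of adjacent indices preserves realizability. -/
theorem stmt10 {n : ℕ} (i j : Fin n) (hij : i ≠ j) (s : Fin n → Fin n → ℤ)
    (hreal : Realizable s) (hadj : Adjacent i j s) :
    Realizable (tau i j s) :=
  stmt10_general i j s hreal hadj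
end

section
/- If s is a realizable set of signs corresponding to permutation σ (i.e., s(i,j)=+1 iff σ(i)<σ(j)), and indices i,j are adjacent in s, then τ_{ij}(s) is the realizable set of signs corresponding to the permutation (σ(i) σ(j)) ∘ σ obtained by swapping the values σ(i) and σ(j), and |σ(i) - σ(j)| = 1. -/
/-- The realizable set of signs associated to a permutation `σ`:
`sPerm σ i j = +1` iff `σ i < σ j`. -/
def sPerm {n : ℕ} (σ : Equiv.Perm (Fin n)) : Fin n → Fin n → ℤ :=
  fun i j => if σ i < σ j then 1 else if σ j < σ i then -1 else 0

theorem Equiv.swap_lt_swap_iff_of_covBy {α : Type*} [LinearOrder α] {a b x y : α}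
    (hab : a ⋖ b) (hxy : ¬((x = a ∧ y = b) ∨ (x = b ∧ y = a))) :
    Equiv.swap a b x < Equiv.swap a b y ↔ x < y := by
  have hleft : ∀ {z}, z < b ↔ z ≤ a := hab.lt_iff_le_left
  have hright : ∀ {z}, a < z ↔ b ≤ z := hab.lt_iff_le_right
  grind

theorem Fin.natAbs_sub_eq_one_of_covBy {n : ℕ} {a b : Fin n} (h : a ⋖ b ∨ b ⋖ a) :
    (((a : ℕ) : ℤ) - ((b : ℕ) : ℤ)).natAbs = 1 := by
  simp only [Fin.covBy_iff, Nat.covBy_iff_add_one_eq] at h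
  omega

theorem Adjacent.symm {n : ℕ} {i j : Fin n} {s : Fin n → Fin n → ℤ} (h : Adjacent i j s) :
    Adjacent j i s :=
  fun k hkj hki => (h k hki hkj).symm

section sPerm

variable {n : ℕ}

theorem sPerm_comm (σ : Equiv.Perm (Fin n)) (p q : Fin n) : sPerm σ q p = -sPerm σ p q := by
  unfold sPerm
  split_ifs <;> first | rfl | (exfalso; order)

theorem sPerm_congr {σ τ : Equiv.Perm (Fin n)} {p q : Fin n}
    (hpq : σ p < σ q ↔ τ p < τ q) (hqp : σ q < σ p ↔ τ q < τ p) :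
    sPerm σ p q = sPerm τ p q := by
  simp only [sPerm, hpq, hqp]

theorem covBy_of_adjacent_sPerm {σ : Equiv.Perm (Fin n)} {i j : Fin n}
    (hadj : Adjacent i j (sPerm σ)) (hlt : σ i < σ j) : σ i ⋖ σ j := by
  refine ⟨hlt, fun c hic hcj => ?_⟩
  obtain ⟨k, rfl⟩ := σ.surjective c
  have h := hadj k (by rintro rfl; exact hic.false) (by rintro rfl; exact hcj.false)
  simp [sPerm, hic, hcj, hcj.asymm] at h

theorem covBy_or_covBy_of_adjacent_sPerm {σ : Equiv.Perm (Fin n)} {i j : Fin n}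
    (hij : i ≠ j) (hadj : Adjacent i j (sPerm σ)) : σ i ⋖ σ j ∨ σ j ⋖ σ i :=
  (σ.injective.ne hij).lt_or_gt.imp (covBy_of_adjacent_sPerm hadj)
    (covBy_of_adjacent_sPerm hadj.symm)

theorem tau_sPerm_eq_of_covBy {σ : Equiv.Perm (Fin n)} {i j : Fin n}
    (h : σ i ⋖ σ j ∨ σ j ⋖ σ i) :
    tau i j (sPerm σ) = sPerm (σ.trans (Equiv.swap (σ i) (σ j))) := by
  have hswap : ∀ x y, ¬((x = σ i ∧ y = σ j) ∨ (x = σ j ∧ y = σ i)) →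
      (Equiv.swap (σ i) (σ j) x < Equiv.swap (σ i) (σ j) y ↔ x < y) := by
    intro x y hxy
    rcases h with h | h
    · exact Equiv.swap_lt_swap_iff_of_covBy h hxy
    · rw [Equiv.swap_comm]
      exact Equiv.swap_lt_swap_iff_of_covBy h (by tauto)
  funext p q
  simp only [tau]
  split_ifs with hpq
  · rw [← sPerm_comm]
    rcases hpq with ⟨rfl, rfl⟩ | ⟨rfl, rfl⟩ <;>
      simp only [sPerm, Equiv.trans_apply, Equiv.swap_apply_left, Equiv.swap_apply_right]
  · have hσ : ¬((σ p = σ i ∧ σ q = σ j) ∨ (σ p = σ j ∧ σ q = σ i)) := by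
      simpa only [σ.injective.eq_iff] using hpq
    exact sPerm_congr (hswap _ _ hσ).symm (hswap _ _ (by tauto)).symm

end sPerm

/-- A good flip on `s_σ` yields `s_{(σ i, σ j) ∘ σ}`, and `σ i`, `σ j` are
consecutive. -/
theorem stmt16 {n : ℕ} (σ : Equiv.Perm (Fin n)) (i j : Fin n) (hij : i ≠ j)
    (hadj : Adjacent i j (sPerm σ)) :
    tau i j (sPerm σ) = sPerm (σ.trans (Equiv.swap (σ i) (σ j))) ∧
    (((σ i : ℕ) : ℤ) - ((σ j : ℕ) : ℤ)).natAbs = 1 := by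
  have hcov := covBy_or_covBy_of_adjacent_sPerm hij hadj
  exact ⟨tau_sPerm_eq_of_covBy hcov, Fin.natAbs_sub_eq_one_of_covBy hcov⟩
end
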